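/- For all real numbers u₁ and u₂ with u₂ ≠ 0, one has e₂(u₁,u₂) = (2/π)·arctan(u₁/u₂) − ẽ₂(u₁,u₂), where e₂(u₁,u₂) := 2u₂·∫₀¹ e^{−π t² u₂²}·E₁(t·u₁) dt, E₁(u) := 2u·∫₀¹ e^{−π u² v²} dv, and ẽ₂(a,b) := (2/π)·b·e^{−π b²}·∫₀^a e^{−π v²}/(b² + v²) dv. -/

import Mathlib

open Real Set

noncomputable section

/-- The error function `E₁(u) = 2u∫₀¹ e^{−πu²v²} dv`. -/
def E₁ (u : ℝ) : ℝ := 2 * u * ∫ v in (0:ℝ)..1, Real.exp (-Real.pi * u^2 * v^2)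

/-- `e₂(u₁,u₂) = 2u₂∫₀¹ e^{−πt²u₂²} E₁(tu₁) dt`. -/
def e₂ (u₁ u₂ : ℝ) : ℝ :=
  2 * u₂ * ∫ t in (0:ℝ)..1, Real.exp (-Real.pi * t^2 * u₂^2) * E₁ (t * u₁)

/-- `ẽ₂(a,b) = (2/π)·b·e^{−πb²}·∫₀^a e^{−πv²}/(b²+v²) dv` (which is `0` for `b = 0`). -/
def etilde₂ (a b : ℝ) : ℝ :=
  (2 / Real.pi) * b * Real.exp (-Real.pi * b^2) *
    ∫ v in (0:ℝ)..a, Real.exp (-Real.pi * v^2) / (b^2 + v^2)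

/-!
Writing `E₁(tu₁) = 2tu₁∫₀¹ e^{−πt²u₁²v²} dv` turns `e₂(u₁,u₂)` into the double integral
`4u₁u₂∫₀¹∫₀¹ t·e^{−π(u₂²+u₁²v²)t²} dt dv` (after Fubini). The inner integral is elementary,
`(1 − e^{−πc})/(2πc)` with `c = u₂² + u₁²v² > 0`, and the substitution `w = u₁v` leaves
`(2/π)·u₂∫₀^{u₁} (1 − e^{−π(u₂²+w²)})/(u₂²+w²) dw`. The `1` gives `(2/π)·arctan(u₁/u₂)` and the
exponential, since `e^{−π(u₂²+w²)} = e^{−πu₂²}e^{−πw²}`, gives `ẽ₂(u₁,u₂)`.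
-/

open MeasureTheory

theorem integral_mul_exp_neg_mul_sq {a : ℝ} (ha : a ≠ 0) (b : ℝ) :
    ∫ t in (0:ℝ)..b, t * exp (-a * t ^ 2) = (1 - exp (-a * b ^ 2)) / (2 * a) := by
  have hderiv (t : ℝ) :
      HasDerivAt (fun t ↦ -exp (-a * t ^ 2) / (2 * a)) (t * exp (-a * t ^ 2)) t := by
    refine (((hasDerivAt_pow 2 t).const_mul (-a)).exp.neg.div_const (2 * a)).congr_deriv ?_
    field_simp
    ring
  rw [intervalIntegral.integral_eq_sub_of_hasDerivAt (fun t _ ↦ hderiv t)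
    (Continuous.intervalIntegrable (by fun_prop) _ _)]
  simp only [neg_mul, ne_eq, OfNat.ofNat_ne_zero, not_false_eq_true, zero_pow, mul_zero, exp_zero]
  ring

theorem intervalIntegral_intervalIntegral_swap_of_continuous {F : ℝ → ℝ → ℝ}
    (hF : Continuous F.uncurry) (a b c d : ℝ) :
    ∫ x in a..b, ∫ y in c..d, F x y = ∫ y in c..d, ∫ x in a..b, F x y :=
  intervalIntegral_intervalIntegral_swap <|
    (hF.continuousOn.integrableOn_compact (isCompact_uIcc.prod isCompact_uIcc)).mono_set
      (prod_mono uIoc_subset_uIcc uIoc_subset_uIcc)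

theorem e₂_eq_double_integral (u₁ u₂ : ℝ) :
    e₂ u₁ u₂ = 4 * u₁ * u₂ *
      ∫ v in (0:ℝ)..1, ∫ t in (0:ℝ)..1, t * exp (-(π * (u₂ ^ 2 + (u₁ * v) ^ 2)) * t ^ 2) := by
  have hinner (t : ℝ) : exp (-π * t ^ 2 * u₂ ^ 2) * E₁ (t * u₁) = 2 * u₁ *
      ∫ v in (0:ℝ)..1, t * exp (-(π * (u₂ ^ 2 + (u₁ * v) ^ 2)) * t ^ 2) := by
    simp only [E₁, ← intervalIntegral.integral_const_mul]
    refine intervalIntegral.integral_congr fun v _ ↦ ?_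
    rw [show -(π * (u₂ ^ 2 + (u₁ * v) ^ 2)) * t ^ 2
      = -π * t ^ 2 * u₂ ^ 2 + -π * (t * u₁) ^ 2 * v ^ 2 by ring, exp_add]
    ring
  rw [e₂, intervalIntegral_intervalIntegral_swap_of_continuous (by fun_prop)]
  simp_rw [hinner, intervalIntegral.integral_const_mul]
  ring

theorem e₂_eq_integral {u₂ : ℝ} (hu₂ : u₂ ≠ 0) (u₁ : ℝ) :
    e₂ u₁ u₂ = 2 / π * u₂ *
      ∫ w in (0:ℝ)..u₁, (1 - exp (-(π * (u₂ ^ 2 + w ^ 2)))) / (u₂ ^ 2 + w ^ 2) := by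
  have hc (w : ℝ) : π * (u₂ ^ 2 + w ^ 2) ≠ 0 := by positivity
  have hsubst := intervalIntegral.mul_integral_comp_mul_left (a := 0) (b := 1) (c := u₁)
    (f := fun w ↦ (1 - exp (-(π * (u₂ ^ 2 + w ^ 2)))) / (u₂ ^ 2 + w ^ 2))
  rw [mul_zero, mul_one] at hsubst
  rw [e₂_eq_double_integral, ← hsubst]
  simp_rw [integral_mul_exp_neg_mul_sq (hc _), one_pow, mul_one, div_mul_eq_div_div_swap,
    intervalIntegral.integral_div]
  field_simp
  ring

theorem e₂_eq_arctan_sub_etilde₂ (u₁ u₂ : ℝ) (hu₂ : u₂ ≠ 0) :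
    e₂ u₁ u₂ = (2 / Real.pi) * Real.arctan (u₁ / u₂) - etilde₂ u₁ u₂ := by
  have hpos (w : ℝ) : 0 < u₂ ^ 2 + w ^ 2 := by positivity
  have hsplit (w : ℝ) : u₂ * ((1 - exp (-(π * (u₂ ^ 2 + w ^ 2)))) / (u₂ ^ 2 + w ^ 2)) =
      u₂ / (u₂ ^ 2 + w ^ 2) - u₂ * exp (-π * u₂ ^ 2) * (exp (-π * w ^ 2) / (u₂ ^ 2 + w ^ 2)) := by
    rw [show -(π * (u₂ ^ 2 + w ^ 2)) = -π * u₂ ^ 2 + -π * w ^ 2 by ring, exp_add]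
    ring
  have hint : IntervalIntegrable (fun w ↦ exp (-π * w ^ 2) / (u₂ ^ 2 + w ^ 2)) volume 0 u₁ :=
    (continuous_exp.comp (by fun_prop)).div (by fun_prop) (fun w ↦ (hpos w).ne')
      |>.intervalIntegrable _ _
  rw [e₂_eq_integral hu₂, mul_assoc, ← intervalIntegral.integral_const_mul]
  simp_rw [hsplit]
  rw [intervalIntegral.integral_sub _ (hint.const_mul _), integral_div_sq_add_sq,
    intervalIntegral.integral_const_mul, etilde₂]
  · simp only [zero_div, arctan_zero, sub_zero, neg_mul]
    ring
  · exact (continuous_const.div (by fun_prop) fun w ↦ (hpos w).ne').intervalIntegrable _ _
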